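/- arXiv:1506.05297 — 4 statements merged into one kernel-verified Lean document; each statement's English description precedes it below -/
import Mathlib

section
/- Let n ≥ 1, let F : ℝⁿ → ℝⁿ be Lipschitz continuous with Lipschitz constant L₂ ≥ 0, let δt > 0 and let x_G, x₀, w ∈ ℝⁿ. Let χ : [0, δt] → ℝⁿ be differentiable with χ'(t) = F(χ(t)) for all t ∈ [0, δt] and χ(0) = x_G. Suppose x : [0, δt] → ℝⁿ is differentiable with x(0) = x₀ and, for all t ∈ [0, δt], x'(t) = F(x(t)) + (1/δt)(x_G − x₀) + F(χ(t)) + w − F(χ(t) + t·w + (1 − t/δt)(x₀ − x_G)). Then x(t) = χ(t) + t·w + (1 − t/δt)(x₀ − x_G) for all t ∈ [0, δt]; in particular, x(δt) = χ(δt) + δt·w. -/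
theorem stmt_2 (n : ℕ) (hn : 1 ≤ n)
    (F : EuclideanSpace ℝ (Fin n) → EuclideanSpace ℝ (Fin n))
    (L₂ : ℝ) (hL₂ : 0 ≤ L₂) (hLip : ∀ a b, ‖F a - F b‖ ≤ L₂ * ‖a - b‖)
    (δt : ℝ) (hδt : 0 < δt) (xG x₀ w : EuclideanSpace ℝ (Fin n))
    (χ x : ℝ → EuclideanSpace ℝ (Fin n))
    (hχ0 : χ 0 = xG)
    (hχ : ∀ t ∈ Set.Icc (0:ℝ) δt, HasDerivWithinAt χ (F (χ t)) (Set.Icc (0:ℝ) δt) t)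
    (hx0 : x 0 = x₀)
    (hx : ∀ t ∈ Set.Icc (0:ℝ) δt,
      HasDerivWithinAt x
        (F (x t) + (1/δt) • (xG - x₀) + F (χ t) + w
          - F (χ t + t • w + (1 - t/δt) • (x₀ - xG)))
        (Set.Icc (0:ℝ) δt) t) :
    (∀ t ∈ Set.Icc (0:ℝ) δt, x t = χ t + t • w + (1 - t/δt) • (x₀ - xG)) ∧
      x δt = χ δt + δt • w := by
  set y : ℝ → EuclideanSpace ℝ (Fin n) :=
    fun t => χ t + t • w + (1 - t/δt) • (x₀ - xG) with hy
  set v : ℝ → EuclideanSpace ℝ (Fin n) → EuclideanSpace ℝ (Fin n) :=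
    fun t z => F z + (1/δt) • (xG - x₀) + F (χ t) + w - F (y t) with hv
  have hFlip : LipschitzWith L₂.toNNReal F := by
    apply LipschitzWith.of_dist_le_mul
    intro a b
    simpa [dist_eq_norm, Real.coe_toNNReal L₂ hL₂] using hLip a b
  have hvlip : ∀ t, LipschitzWith L₂.toNNReal (v t) := by
    intro t
    apply LipschitzWith.of_dist_le_mul
    intro a b
    have hd : v t a - v t b = F a - F b := by simp [hv]
    rw [dist_eq_norm, hd]
    simpa [dist_eq_norm, Real.coe_toNNReal L₂ hL₂] using hLip a b
  -- y has the right derivative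
  have hy' : ∀ t ∈ Set.Icc (0:ℝ) δt, HasDerivWithinAt y (v t (y t)) (Set.Icc (0:ℝ) δt) t := by
    intro t ht
    have h1 : HasDerivWithinAt (fun t : ℝ => t • w) w (Set.Icc (0:ℝ) δt) t := by
      simpa using (hasDerivWithinAt_id t (Set.Icc (0:ℝ) δt)).smul_const w
    have h2 : HasDerivWithinAt (fun t : ℝ => (1 - t/δt) • (x₀ - xG))
        ((-(1/δt)) • (x₀ - xG)) (Set.Icc (0:ℝ) δt) t := by
      have : HasDerivWithinAt (fun t : ℝ => (1 - t/δt)) (-(1/δt)) (Set.Icc (0:ℝ) δt) t := by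
        have := ((hasDerivWithinAt_id t (Set.Icc (0:ℝ) δt)).div_const δt).const_sub 1
        simpa [one_div] using this
      simpa using this.smul_const (x₀ - xG)
    have := ((hχ t ht).add h1).add h2
    have heq : F (χ t) + w + (-(1/δt)) • (x₀ - xG) = v t (y t) := by
      simp only [hv, hy]
      module
    rw [heq] at this
    exact this
  have hx' : ∀ t ∈ Set.Icc (0:ℝ) δt, HasDerivWithinAt x (v t (x t)) (Set.Icc (0:ℝ) δt) t := by
    intro t ht
    exact hx t ht
  have hIci : ∀ t ∈ Set.Ico (0:ℝ) δt, Set.Icc (0:ℝ) δt ∈ nhdsWithin t (Set.Ici t) := by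
    intro t ht
    have : Set.Icc t δt ∈ nhdsWithin t (Set.Ici t) := Icc_mem_nhdsGE_of_mem ⟨le_refl t, ht.2⟩
    exact Filter.mem_of_superset this (Set.Icc_subset_Icc_left ht.1)
  have key : Set.EqOn x y (Set.Icc (0:ℝ) δt) := by
    apply ODE_solution_unique (v := v) hvlip
    · exact fun t ht => (hx' t ht).continuousWithinAt
    · exact fun t ht => (hx' t ⟨ht.1, ht.2.le⟩).mono_of_mem_nhdsWithin (hIci t ht)
    · exact fun t ht => (hy' t ht).continuousWithinAt
    · exact fun t ht => (hy' t ⟨ht.1, ht.2.le⟩).mono_of_mem_nhdsWithin (hIci t ht)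
    · simp [hx0, hy, hχ0]
  constructor
  · exact fun t ht => key ht
  · have := key ⟨hδt.le, le_refl δt⟩
    simp only [hy] at this
    rw [this, div_self hδt.ne']
    simp
end

section
/- Suppose μ ≥ 4λ/(1−λ). Then h''(ḡ(μ)) = ((1−λ)μ − 2λ)·v_max/(μ·M·L) = (μ/(2λ·v_max))·ḡ(μ), and for every d with 0 < d ≤ ḡ(μ), it holds that h''(d) ≥ (μ/(2λ·v_max))·d. -/
/-- The function h''(d) from Proposition 6.2. -/
noncomputable def hHigh (lam vmax M L d : ℝ) : ℝ :=
  ((1 - lam) * vmax + Real.sqrt ((1 - lam) ^ 2 * vmax ^ 2 - 4 * M * L * d)) / (2 * M * L)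

/-- The function ḡ(μ) from the proof of Proposition 6.2. -/
noncomputable def gbar (lam vmax M L : ℝ) : ℝ → ℝ := fun μ =>
  2 * (lam * (1 - lam) * μ - 2 * lam ^ 2) * vmax ^ 2 / (μ ^ 2 * M * L)

theorem stmt_8 (vmax M L lam : ℝ) (hv : 0 < vmax) (hM : 0 < M) (hL : 0 < L)
    (hlam : lam ∈ Set.Ioo (0:ℝ) 1) (μ : ℝ) (hμ : 4 * lam / (1 - lam) ≤ μ) :
    hHigh lam vmax M L (gbar lam vmax M L μ) = ((1 - lam) * μ - 2 * lam) * vmax / (μ * M * L) ∧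
    ((1 - lam) * μ - 2 * lam) * vmax / (μ * M * L)
      = (μ / (2 * lam * vmax)) * gbar lam vmax M L μ ∧
    ∀ d : ℝ, 0 < d → d ≤ gbar lam vmax M L μ →
      (μ / (2 * lam * vmax)) * d ≤ hHigh lam vmax M L d := by
  obtain ⟨hl0, hl1⟩ := hlam
  have h1 : (0:ℝ) < 1 - lam := by linarith
  have hμ0 : 0 < μ := lt_of_lt_of_le (div_pos (by linarith) h1) hμ
  have hkey : 4 * lam ≤ (1 - lam) * μ := by
    have := (div_le_iff₀ h1).mp hμ
    linarith
  refine ⟨?_, ?_, ?_⟩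
  · have hs : (1 - lam) ^ 2 * vmax ^ 2 - 4 * M * L * (gbar lam vmax M L μ)
        = (((1 - lam) * μ - 4 * lam) * vmax / μ) ^ 2 := by
      unfold gbar
      field_simp
      ring
    have hnn : 0 ≤ ((1 - lam) * μ - 4 * lam) * vmax / μ := by
      apply div_nonneg _ hμ0.le
      apply mul_nonneg (by linarith) hv.le
    unfold hHigh
    rw [hs, Real.sqrt_sq hnn]
    field_simp
    ring
  · unfold gbar
    field_simp
  · intro d hd hdg
    set S := (1 - lam) ^ 2 * vmax ^ 2 - 4 * M * L * d with hS
    set x := M * L * μ * d / (lam * vmax) - (1 - lam) * vmax with hx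
    have hfac : S - x ^ 2
        = (M ^ 2 * L ^ 2 * μ ^ 2 * d / (lam ^ 2 * vmax ^ 2)) * (gbar lam vmax M L μ - d) := by
      unfold gbar
      rw [hS, hx]
      field_simp
      ring
    have hx2 : x ^ 2 ≤ S := by
      have hpos : 0 ≤ M ^ 2 * L ^ 2 * μ ^ 2 * d / (lam ^ 2 * vmax ^ 2) := by positivity
      have h0 : 0 ≤ S - x ^ 2 := by
        rw [hfac]; exact mul_nonneg hpos (sub_nonneg.mpr hdg)
      linarith
    have hxle : x ≤ Real.sqrt S := by
      calc x ≤ |x| := le_abs_self x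
      _ = Real.sqrt (x ^ 2) := (Real.sqrt_sq_eq_abs x).symm
      _ ≤ Real.sqrt S := Real.sqrt_le_sqrt hx2
    unfold hHigh
    rw [le_div_iff₀ (by positivity)]
    have heq : μ / (2 * lam * vmax) * d * (2 * M * L) = x + (1 - lam) * vmax := by
      rw [hx]; field_simp; ring
    rw [heq]
    linarith
end

section
/- Let N ≥ 1 be an integer, let L₁, L₂ ≥ 0, λ ∈ (0,1), and let M, v_max, d, δt be positive reals with v_max < M. Set L = 4L₁√N + 3L₂ and R_max = δt(M + v_max). If δt ≥ d/(M + v_max) and M·L·δt² − (1−λ)·v_max·δt + d ≤ 0, then L₁·√N·(R_max + d) + d/δt + L₂(δt·λ·v_max + d) + λ·v_max ≤ v_max. -/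
theorem stmt_11 (N : ℕ) (hN : 1 ≤ N) (L₁ L₂ : ℝ) (hL₁ : 0 ≤ L₁) (hL₂ : 0 ≤ L₂)
    (lam M vmax d δt L Rmax : ℝ) (hlam : lam ∈ Set.Ioo (0:ℝ) 1)
    (hM : 0 < M) (hv : 0 < vmax) (hvM : vmax < M) (hd : 0 < d) (hδt : 0 < δt)
    (hL : L = 4 * L₁ * Real.sqrt N + 3 * L₂) (hRmax : Rmax = δt * (M + vmax))
    (h1 : d / (M + vmax) ≤ δt)
    (h2 : M * L * δt ^ 2 - (1 - lam) * vmax * δt + d ≤ 0) :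
    L₁ * Real.sqrt N * (Rmax + d) + d / δt + L₂ * (δt * lam * vmax + d) + lam * vmax
      ≤ vmax := by
  obtain ⟨hlam0, hlam1⟩ := hlam
  set s := Real.sqrt N with hs_def
  have hs : 1 ≤ s := by
    rw [hs_def, show (1:ℝ) = Real.sqrt 1 by simp]
    exact Real.sqrt_le_sqrt (by exact_mod_cast hN)
  have hMv : 0 < M + vmax := by linarith
  have hdle : d ≤ δt * (M + vmax) := by
    rw [div_le_iff₀ hMv] at h1; linarith
  have hA : 0 ≤ L₁ * s := mul_nonneg hL₁ (le_trans zero_le_one hs)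
  have hlvM : lam * vmax < M := by nlinarith
  have e1 : L₁ * s * (Rmax + d) ≤ L₁ * s * (4 * M * δt) := by
    apply mul_le_mul_of_nonneg_left _ hA
    rw [hRmax]
    nlinarith [mul_lt_mul_of_pos_left hvM hδt]
  have e2 : L₂ * (δt * lam * vmax + d) ≤ L₂ * (3 * M * δt) := by
    apply mul_le_mul_of_nonneg_left _ hL₂
    nlinarith [mul_lt_mul_of_pos_left hlvM hδt, mul_lt_mul_of_pos_left hvM hδt]
  have key : L₁ * s * (Rmax + d) + L₂ * (δt * lam * vmax + d) ≤ M * L * δt := by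
    rw [hL]; nlinarith [e1, e2]
  have hq : d / δt ≤ (1 - lam) * vmax - M * L * δt := by
    rw [div_le_iff₀ hδt]
    nlinarith
  linarith
end

section
/- Let n ≥ 1, let I be a countable index set, and let {S_l}_{l∈I} be a family of subsets of ℝⁿ with diam(S_l) ≤ d_max for every l ∈ I, where d_max > 0. Let μ > 0, let c ∈ ℝⁿ and r ≥ (μ/2)·d_max, and suppose the closed ball B(c; r) = {x ∈ ℝⁿ : |x − c| ≤ r} is contained in ⋃_{l∈I} S_l. Then the set J = {l ∈ I : S_l ∩ B(c; r) ≠ ∅} is either infinite or its cardinality k satisfies k ≥ μⁿ; in particular, k ≥ ⌊μⁿ⌋ + 1 if μⁿ is not an integer, and k ≥ μⁿ if μⁿ is an integer. -/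
open MeasureTheory Set ENNReal

lemma translate_vol (A : Set ℝ) (b : ℝ) : volume ((fun x => x + b) '' A) = volume A := by
  rw [Set.image_add_right, measure_preimage_add_right]

lemma sumset_one_dim {A B C : Set ℝ} (hA : MeasurableSet A) (hB : MeasurableSet B)
    (hAne : A.Nonempty) (hBne : B.Nonempty)
    (hsub : ∀ x ∈ A, ∀ y ∈ B, x + y ∈ C) :
    volume A + volume B ≤ volume C := by
  rcases eq_or_ne (volume A) ∞ with hAinf | hAfin
  · obtain ⟨b, hb⟩ := hBne
    have hsubC : (fun x => x + b) '' A ⊆ C := by rintro _ ⟨x, hx, rfl⟩; exact hsub x hx b hb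
    have : volume C = ∞ := top_le_iff.1 <| by
      calc (⊤:ENNReal) = volume ((fun x => x + b) '' A) := by rw [translate_vol]; exact hAinf.symm
        _ ≤ volume C := measure_mono hsubC
    simp [this]
  rcases eq_or_ne (volume B) ∞ with hBinf | hBfin
  · obtain ⟨a, ha⟩ := hAne
    have hsubC : (fun y => y + a) '' B ⊆ C := by
      rintro _ ⟨y, hy, rfl⟩; show y + a ∈ C; rw [add_comm]; exact hsub a ha y hy
    have : volume C = ∞ := top_le_iff.1 <| by
      calc (⊤:ENNReal) = volume ((fun y => y + a) '' B) := by rw [translate_vol]; exact hBinf.symm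
        _ ≤ volume C := measure_mono hsubC
    simp [this]
  -- main case: finite; approximate by compacts within ε
  refine ENNReal.le_of_forall_pos_le_add fun ε hε hC => ?_
  have hε2 : ((ε : ENNReal)/2) ≠ 0 := by simp [hε.ne']
  obtain ⟨K, hKA, hKc, hKv⟩ := hA.exists_isCompact_lt_add hAfin hε2
  obtain ⟨L, hLB, hLc, hLv⟩ := hB.exists_isCompact_lt_add hBfin hε2
  -- make K, L nonempty by inserting a point
  obtain ⟨a, ha⟩ := hAne
  obtain ⟨b, hb⟩ := hBne
  set K' : Set ℝ := insert a K with hK'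
  set L' : Set ℝ := insert b L with hL'
  have hK'c : IsCompact K' := hKc.insert a
  have hL'c : IsCompact L' := hLc.insert b
  have hK'A : K' ⊆ A := insert_subset ha hKA
  have hL'B : L' ⊆ B := insert_subset hb hLB
  have hK'ne : K'.Nonempty := ⟨a, mem_insert _ _⟩
  have hL'ne : L'.Nonempty := ⟨b, mem_insert _ _⟩
  -- sup of K' attained, inf of L' attained
  obtain ⟨k0, hk0K, hk0max⟩ := hK'c.exists_isMaxOn hK'ne continuous_id.continuousOn
  obtain ⟨l0, hl0L, hl0min⟩ := hL'c.exists_isMinOn hL'ne continuous_id.continuousOn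
  -- two translated copies inside C
  have h1 : (fun x => x + l0) '' K' ⊆ C := by
    rintro _ ⟨x, hx, rfl⟩; exact hsub x (hK'A hx) l0 (hL'B hl0L)
  have h2 : (fun y => y + k0) '' L' ⊆ C := by
    rintro _ ⟨y, hy, rfl⟩; show y + k0 ∈ C; rw [add_comm]; exact hsub k0 (hK'A hk0K) y (hL'B hy)
  have hinter : ((fun x => x + l0) '' K') ∩ ((fun y => y + k0) '' L') ⊆ {k0 + l0} := by
    rintro z ⟨⟨x, hx, rfl⟩, ⟨y, hy, hyz⟩⟩
    have hxk : x ≤ k0 := hk0max hx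
    have hly : l0 ≤ y := hl0min hy
    have : x + l0 = k0 + l0 := le_antisymm (by linarith) (by
      have : y + k0 = x + l0 := hyz
      linarith)
    simp [this]
  have hm1 : MeasurableSet ((fun x => x + l0) '' K') := (hK'c.image (continuous_add_right l0)).measurableSet
  have hm2 : MeasurableSet ((fun y => y + k0) '' L') := (hL'c.image (continuous_add_right k0)).measurableSet
  have hunion : volume (((fun x => x + l0) '' K') ∪ ((fun y => y + k0) '' L'))
      = volume K' + volume L' := by
    have hinter0 : volume (((fun x => x + l0) '' K') ∩ ((fun y => y + k0) '' L')) = 0 :=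
      measure_mono_null hinter (by simp)
    have := measure_union_add_inter (μ := volume) ((fun x => x + l0) '' K') hm2
    rw [hinter0, add_zero] at this
    rw [this, translate_vol, translate_vol]
  have hUC : volume K' + volume L' ≤ volume C := by
    rw [← hunion]
    exact measure_mono (union_subset h1 h2)
  have hKv' : volume A ≤ volume K' + ε/2 := le_trans hKv.le (by gcongr; exact subset_insert a K)
  have hLv' : volume B ≤ volume L' + ε/2 := le_trans hLv.le (by gcongr; exact subset_insert b L)
  calc volume A + volume B ≤ (volume K' + ε/2) + (volume L' + ε/2) := add_le_add hKv' hLv'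
    _ = (volume K' + volume L') + (ε/2 + ε/2) := by ring
    _ ≤ volume C + ε := by rw [ENNReal.add_halves]; exact add_le_add_left hUC _

lemma layer (φ : ℝ → ℝ≥0∞) (mφ : Measurable φ) (hφ : ∀ x, φ x ≤ 1) :
    ∫⁻ x, φ x = ∫⁻ t in Ioi (0:ℝ), volume {a | ENNReal.ofReal t < φ a} := by
  have hne : ∀ x, φ x ≠ ⊤ := fun x => ((hφ x).trans_lt one_lt_top).ne
  have h1 : ∫⁻ x, φ x = ∫⁻ x, ENNReal.ofReal ((φ x).toReal) := by
    refine lintegral_congr fun x => (ENNReal.ofReal_toReal (hne x)).symm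
  rw [h1, lintegral_eq_lintegral_meas_lt volume (ae_of_all _ fun x => ENNReal.toReal_nonneg)
    (mφ.ennreal_toReal.aemeasurable)]
  refine setLIntegral_congr_fun measurableSet_Ioi (fun t ht => ?_)
  congr 1
  ext a
  simp only [mem_setOf_eq]
  rw [ENNReal.ofReal_lt_iff_lt_toReal (le_of_lt ht) (hne a)]

lemma meas_level (f : ℝ → ℝ≥0∞) :
    Measurable fun t : ℝ => volume {a | ENNReal.ofReal t < f a} :=
  Antitone.measurable fun s t hst => measure_mono fun a ha =>
    lt_of_le_of_lt (ENNReal.ofReal_le_ofReal hst) ha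

lemma L1 {f g h : ℝ → ℝ≥0∞} (mf : Measurable f) (mg : Measurable g) (mh : Measurable h)
    (hf1 : ∀ x, f x ≤ 1) (hg1 : ∀ y, g y ≤ 1)
    (hfs : ∀ s : ℝ≥0∞, s < 1 → ∃ x, s < f x) (hgs : ∀ s : ℝ≥0∞, s < 1 → ∃ y, s < g y)
    (hcond : ∀ x y, f x * g y ≤ h (x + y) ^ 2) :
    (∫⁻ x, f x) + (∫⁻ y, g y) ≤ ∫⁻ z, h z := by
  set h' : ℝ → ℝ≥0∞ := fun z => min (h z) 1 with hh'
  have mh' : Measurable h' := mh.min measurable_const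
  have hh'le : ∀ z, h' z ≤ 1 := fun z => min_le_right _ _
  have hh'h : ∫⁻ z, h' z ≤ ∫⁻ z, h z := lintegral_mono fun z => min_le_left _ _
  refine le_trans ?_ hh'h
  rw [layer f mf hf1, layer g mg hg1, layer h' mh' hh'le,
    ← lintegral_add_left (Measurable.mono (meas_level f) le_rfl le_rfl)]
  refine setLIntegral_mono_ae ((meas_level h').aemeasurable.restrict) (ae_of_all _ fun t ht => ?_)
  rcases lt_or_ge t 1 with ht1 | ht1
  · set s : ℝ≥0∞ := ENNReal.ofReal t with hs
    have hs1 : s < 1 := by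
      rw [hs, ← ENNReal.ofReal_one]
      exact (ENNReal.ofReal_lt_ofReal_iff_of_nonneg (le_of_lt ht)).2 ht1
    refine sumset_one_dim (measurableSet_lt measurable_const mf)
      (measurableSet_lt measurable_const mg) (hfs s hs1) (hgs s hs1) ?_
    intro x hx y hy
    simp only [Set.mem_setOf_eq] at hx hy ⊢
    have h2 : s * s < f x * g y := ENNReal.mul_lt_mul hx hy
    have h3 : s * s < h (x + y) ^ 2 := lt_of_lt_of_le h2 (hcond x y)
    have hsh : s < h (x + y) := by
      by_contra hcon
      push_neg at hcon
      exact absurd h3 (not_lt.2 (by rw [sq]; exact mul_le_mul' hcon hcon))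
    exact lt_min hsh hs1
  · have hf0 : {a | ENNReal.ofReal t < f a} = ∅ := by
      ext a; simp only [Set.mem_setOf_eq, Set.mem_empty_iff_false, iff_false, not_lt]
      exact (hf1 a).trans (by rw [← ENNReal.ofReal_one]; exact ENNReal.ofReal_le_ofReal ht1)
    have hg0 : {a | ENNReal.ofReal t < g a} = ∅ := by
      ext a; simp only [Set.mem_setOf_eq, Set.mem_empty_iff_false, iff_false, not_lt]
      exact (hg1 a).trans (by rw [← ENNReal.ofReal_one]; exact ENNReal.ofReal_le_ofReal ht1)
    simp [hf0, hg0]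

lemma amgm_ennreal (P Q : ℝ≥0∞) : P * Q ≤ (2⁻¹ * (P + Q)) ^ 2 := by
  rcases eq_or_ne P ⊤ with hP | hP
  · rcases eq_or_ne Q 0 with hQ | hQ
    · simp [hQ]
    · have h : (2⁻¹ : ℝ≥0∞) * (P + Q) = ⊤ := by simp [hP]
      rw [h]
      simp [ENNReal.top_pow]
  · rcases eq_or_ne Q ⊤ with hQ | hQ
    · rcases eq_or_ne P 0 with hP0 | hP0
      · simp [hP0]
      · have h : (2⁻¹ : ℝ≥0∞) * (P + Q) = ⊤ := by simp [hQ]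
        rw [h]
        simp [ENNReal.top_pow]
    · lift P to NNReal using hP
      lift Q to NNReal using hQ
      have h2 : ((2 : ℝ≥0∞))⁻¹ = ((2⁻¹ : NNReal) : ℝ≥0∞) := by
        rw [ENNReal.coe_inv (by norm_num)]; norm_num
      rw [h2, ← ENNReal.coe_add, ← ENNReal.coe_mul, ← ENNReal.coe_mul, ← ENNReal.coe_pow,
        ENNReal.coe_le_coe, ← NNReal.coe_le_coe]
      push_cast
      nlinarith [sq_nonneg ((P : ℝ) - (Q : ℝ))]

lemma PL_real_bounded {f g h : ℝ → ℝ≥0∞} (mf : Measurable f) (mg : Measurable g)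
    (mh : Measurable h) (M : ℝ≥0∞) (hM : M ≠ ⊤) (hfM : ∀ x, f x ≤ M) (hgM : ∀ y, g y ≤ M)
    (hcond : ∀ x y, f x * g y ≤ h (x + y) ^ 2) :
    (∫⁻ x, f x) * (∫⁻ y, g y) ≤ (2⁻¹ * ∫⁻ z, h z) ^ 2 := by
  set a : ℝ≥0∞ := ⨆ x, f x with ha
  set b : ℝ≥0∞ := ⨆ y, g y with hb
  have haM : a ≠ ⊤ := ((iSup_le hfM).trans_lt hM.lt_top).ne
  have hbM : b ≠ ⊤ := ((iSup_le hgM).trans_lt hM.lt_top).ne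
  rcases eq_or_ne a 0 with ha0 | ha0
  · have : ∀ x, f x = 0 := fun x => le_antisymm (ha0 ▸ le_iSup f x) zero_le
    rw [lintegral_congr this]
    simp
  rcases eq_or_ne b 0 with hb0 | hb0
  · have : ∀ y, g y = 0 := fun y => le_antisymm (hb0 ▸ le_iSup g y) zero_le
    rw [lintegral_congr this]
    simp
  rcases eq_or_ne (∫⁻ z, h z) ⊤ with hh | hh
  · rw [hh]
    have h2 : (2⁻¹ : ℝ≥0∞) * ⊤ = ⊤ := by simp
    rw [h2]
    simp [ENNReal.top_pow]
  set t : ℝ≥0∞ := (a * b) ^ ((2:ℝ)⁻¹) with htdef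
  have hab0 : a * b ≠ 0 := by simp [ha0, hb0]
  have habtop : a * b ≠ ⊤ := ENNReal.mul_ne_top haM hbM
  have ht0 : t ≠ 0 := by
    rw [htdef]
    simp [ENNReal.rpow_eq_zero_iff, hab0, habtop]
  have httop : t ≠ ⊤ := ENNReal.rpow_ne_top_of_nonneg (by norm_num) habtop
  have ht2 : t ^ 2 = a * b := by
    rw [htdef, ← ENNReal.rpow_natCast _ 2, ← ENNReal.rpow_mul]
    norm_num
  have key : (∫⁻ x, f x * a⁻¹) + (∫⁻ y, g y * b⁻¹) ≤ ∫⁻ z, h z * t⁻¹ := by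
    apply L1 (mf.mul_const _) (mg.mul_const _) (mh.mul_const _)
    · intro x
      calc f x * a⁻¹ ≤ a * a⁻¹ := mul_le_mul_left (le_iSup f x) _
        _ = 1 := ENNReal.mul_inv_cancel ha0 haM
    · intro y
      calc g y * b⁻¹ ≤ b * b⁻¹ := mul_le_mul_left (le_iSup g y) _
        _ = 1 := ENNReal.mul_inv_cancel hb0 hbM
    · intro s hs
      have hlt : s * a < a := by
        calc s * a < 1 * a := ENNReal.mul_lt_mul_left ha0 haM hs
          _ = a := one_mul a
      rw [ha, lt_iSup_iff] at hlt
      obtain ⟨x, hx⟩ := hlt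
      refine ⟨x, ?_⟩
      rw [← div_eq_mul_inv, ENNReal.lt_div_iff_mul_lt (Or.inl ha0) (Or.inl haM)]
      exact hx
    · intro s hs
      have hlt : s * b < b := by
        calc s * b < 1 * b := ENNReal.mul_lt_mul_left hb0 hbM hs
          _ = b := one_mul b
      rw [hb, lt_iSup_iff] at hlt
      obtain ⟨y, hy⟩ := hlt
      refine ⟨y, ?_⟩
      rw [← div_eq_mul_inv, ENNReal.lt_div_iff_mul_lt (Or.inl hb0) (Or.inl hbM)]
      exact hy
    · intro x y
      have h1 : f x * a⁻¹ * (g y * b⁻¹) = f x * g y * (a * b)⁻¹ := by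
        rw [ENNReal.mul_inv (Or.inl ha0) (Or.inl haM)]
        ring
      have h2 : (h (x + y) * t⁻¹) ^ 2 = h (x + y) ^ 2 * (a * b)⁻¹ := by
        rw [mul_pow, ← ENNReal.inv_pow, ht2]
      rw [h1, h2]
      exact mul_le_mul_left (hcond x y) _
  have hFa : ∫⁻ x, f x * a⁻¹ = (∫⁻ x, f x) * a⁻¹ :=
    lintegral_mul_const' _ _ (ENNReal.inv_ne_top.2 ha0)
  have hGb : ∫⁻ y, g y * b⁻¹ = (∫⁻ y, g y) * b⁻¹ :=
    lintegral_mul_const' _ _ (ENNReal.inv_ne_top.2 hb0)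
  have hHt : ∫⁻ z, h z * t⁻¹ = (∫⁻ z, h z) * t⁻¹ :=
    lintegral_mul_const' _ _ (ENNReal.inv_ne_top.2 ht0)
  rw [hFa, hGb, hHt] at key
  set P := (∫⁻ x, f x) * a⁻¹
  set Q := (∫⁻ y, g y) * b⁻¹
  set H := (∫⁻ z, h z) * t⁻¹
  have hfP : ∫⁻ x, f x = P * a := by
    rw [show P * a = (∫⁻ x, f x) * (a⁻¹ * a) by ring, ENNReal.inv_mul_cancel ha0 haM, mul_one]
  have hgQ : ∫⁻ y, g y = Q * b := by
    rw [show Q * b = (∫⁻ y, g y) * (b⁻¹ * b) by ring, ENNReal.inv_mul_cancel hb0 hbM, mul_one]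
  have hhH : ∫⁻ z, h z = H * t := by
    rw [show H * t = (∫⁻ z, h z) * (t⁻¹ * t) by ring, ENNReal.inv_mul_cancel ht0 httop, mul_one]
  calc (∫⁻ x, f x) * ∫⁻ y, g y = (P * Q) * (a * b) := by rw [hfP, hgQ]; ring
    _ ≤ (2⁻¹ * (P + Q)) ^ 2 * (a * b) := mul_le_mul_left (amgm_ennreal P Q) _
    _ ≤ (2⁻¹ * H) ^ 2 * (a * b) := by gcongr
    _ = (2⁻¹ * (H * t)) ^ 2 := by rw [← ht2]; ring
    _ = (2⁻¹ * ∫⁻ z, h z) ^ 2 := by rw [← hhH]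

def IsPL {α : Type*} [MeasurableSpace α] [Add α] (μ : Measure α) (c : ℝ≥0∞) : Prop :=
  ∀ f g h : α → ℝ≥0∞, Measurable f → Measurable g → Measurable h →
    (∀ x y, f x * g y ≤ h (x + y) ^ 2) →
    (∫⁻ x, f x ∂μ) * (∫⁻ y, g y ∂μ) ≤ (c * ∫⁻ z, h z ∂μ) ^ 2

lemma isPL_real : IsPL (volume : Measure ℝ) 2⁻¹ := by
  intro f g h mf mg mh hcond
  have hsup : ∀ φ : ℝ → ℝ≥0∞, Measurable φ → ∫⁻ x, φ x = ⨆ m : ℕ, ∫⁻ x, min (φ x) m := by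
    intro φ mφ
    rw [← lintegral_iSup (fun m => mφ.min measurable_const)
      (fun m k hmk x => min_le_min le_rfl (by exact_mod_cast Nat.cast_le.2 hmk))]
    refine lintegral_congr fun x => ?_
    rw [show (⨆ m : ℕ, min (φ x) (m : ℝ≥0∞)) = φ x ⊓ ⨆ m : ℕ, (m : ℝ≥0∞) from (inf_iSup_eq _ _).symm]
    simp [ENNReal.iSup_natCast]
  rw [hsup f mf, hsup g mg, ENNReal.iSup_mul]
  refine iSup_le fun m => ?_
  rw [ENNReal.mul_iSup]
  refine iSup_le fun k => ?_
  refine PL_real_bounded (mf.min measurable_const) (mg.min measurable_const) mh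
    ((max m k : ℕ) : ℝ≥0∞) (by simp) ?_ ?_ ?_
  · intro x
    exact le_trans (min_le_right _ _) (by exact_mod_cast Nat.cast_le.2 (le_max_left m k))
  · intro y
    exact le_trans (min_le_right _ _) (by exact_mod_cast Nat.cast_le.2 (le_max_right m k))
  · intro x y
    exact le_trans (mul_le_mul' (min_le_left _ _) (min_le_left _ _)) (hcond x y)

lemma IsPL.prod {α β : Type*} [MeasurableSpace α] [MeasurableSpace β] [Add α] [Add β]
    {μ : Measure α} {ν : Measure β} [SFinite ν] {c c' : ℝ≥0∞} (hc' : c' ≠ ⊤)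
    (hα : IsPL μ c) (hβ : IsPL ν c') : IsPL (μ.prod ν) (c * c') := by
  intro f g h mf mg mh hcond
  set F : α → ℝ≥0∞ := fun x => ∫⁻ y, f (x, y) ∂ν with hF
  set G : α → ℝ≥0∞ := fun x => ∫⁻ y, g (x, y) ∂ν with hG
  set H : α → ℝ≥0∞ := fun x => ∫⁻ y, h (x, y) ∂ν with hH
  have mF : Measurable F := Measurable.lintegral_prod_right (f := fun x y => f (x, y)) mf
  have mG : Measurable G := Measurable.lintegral_prod_right (f := fun x y => g (x, y)) mg
  have mH : Measurable H := Measurable.lintegral_prod_right (f := fun x y => h (x, y)) mh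
  have step : ∀ x x', F x * G x' ≤ ((fun z => c' * H z) (x + x')) ^ 2 := by
    intro x x'
    refine hβ (fun y => f (x, y)) (fun y => g (x', y)) (fun y => h (x + x', y))
      (mf.comp measurable_prodMk_left) (mg.comp measurable_prodMk_left)
      (mh.comp measurable_prodMk_left) ?_
    intro y y'
    exact hcond (x, y) (x', y')
  have main := hα F G (fun z => c' * H z) mF mG (mH.const_mul c') step
  rw [lintegral_prod f mf.aemeasurable, lintegral_prod g mg.aemeasurable,
    lintegral_prod h mh.aemeasurable]
  calc (∫⁻ x, F x ∂μ) * ∫⁻ x, G x ∂μ ≤ (c * ∫⁻ z, c' * H z ∂μ) ^ 2 := main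
    _ = (c * c' * ∫⁻ z, H z ∂μ) ^ 2 := by rw [lintegral_const_mul' c' H hc', mul_assoc]

lemma IsPL.transport {α β : Type*} [MeasurableSpace α] [MeasurableSpace β] [Add α] [Add β]
    {μ : Measure α} {ν : Measure β} {c : ℝ≥0∞} (e : α ≃ᵐ β)
    (hadd : ∀ x y, e (x + y) = e x + e y) (hmp : MeasurePreserving e μ ν)
    (hPL : IsPL ν c) : IsPL μ c := by
  have hadds : ∀ u v, e.symm (u + v) = e.symm u + e.symm v := by
    intro u v
    apply e.injective
    rw [hadd, e.apply_symm_apply, e.apply_symm_apply, e.apply_symm_apply]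
  intro f g h mf mg mh hcond
  have hmps : MeasurePreserving e.symm ν μ := hmp.symm e
  have h1 : ∫⁻ x, f x ∂μ = ∫⁻ u, f (e.symm u) ∂ν := (hmps.lintegral_comp mf).symm
  have h2 : ∫⁻ x, g x ∂μ = ∫⁻ u, g (e.symm u) ∂ν := (hmps.lintegral_comp mg).symm
  have h3 : ∫⁻ x, h x ∂μ = ∫⁻ u, h (e.symm u) ∂ν := (hmps.lintegral_comp mh).symm
  rw [h1, h2, h3]
  refine hPL _ _ _ (mf.comp e.symm.measurable) (mg.comp e.symm.measurable)
    (mh.comp e.symm.measurable) ?_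
  intro u v
  rw [hadds]
  exact hcond (e.symm u) (e.symm v)

lemma isPL_pi : ∀ n : ℕ, IsPL (volume : Measure (Fin n → ℝ)) (2⁻¹ ^ n) := by
  intro n
  induction n with
  | zero =>
    intro f g h mf mg mh hcond
    have huniv : (volume : Measure (Fin 0 → ℝ)) Set.univ = 1 := by
      simp [MeasureTheory.volume_pi, Measure.pi_univ]
    rw [lintegral_unique, lintegral_unique, lintegral_unique, huniv]
    simp only [pow_zero, one_mul, mul_one]
    convert hcond default default using 3 <;> exact Subsingleton.elim _ _
  | succ n ih =>
    have hprod : IsPL ((volume : Measure ℝ).prod (volume : Measure (Fin n → ℝ)))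
        (2⁻¹ * 2⁻¹ ^ n) := IsPL.prod (by simp [pow_ne_top]) isPL_real ih
    have e := MeasurableEquiv.piFinSuccAbove (fun _ : Fin (n+1) => ℝ) 0
    refine IsPL.transport (MeasurableEquiv.piFinSuccAbove (fun _ : Fin (n+1) => ℝ) 0)
      ?_ (volume_preserving_piFinSuccAbove _ 0) ?_
    · intro x y
      rfl
    · have : ((2:ℝ≥0∞))⁻¹ ^ (n+1) = 2⁻¹ * 2⁻¹ ^ n := by ring
      rw [this]
      exact hprod

lemma isPL_euclidean (n : ℕ) : IsPL (volume : Measure (EuclideanSpace ℝ (Fin n))) (2⁻¹ ^ n) := by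
  refine IsPL.transport (MeasurableEquiv.toLp 2 (Fin n → ℝ)).symm (fun x y => rfl)
    (EuclideanSpace.volume_preserving_symm_measurableEquiv_toLp (Fin n)) (isPL_pi n)

lemma isodiametric {n : ℕ} (S : Set (EuclideanSpace ℝ (Fin n))) (d : ℝ) (hd : 0 ≤ d)
    (hdiam : ∀ p ∈ S, ∀ q ∈ S, ‖p - q‖ ≤ d) :
    volume S ≤ volume (Metric.closedBall (0 : EuclideanSpace ℝ (Fin n)) (d / 2)) := by
  set T := closure S with hT
  have hSbdd : Bornology.IsBounded S := Metric.isBounded_iff.2 ⟨d, fun p hp q hq => by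
    rw [dist_eq_norm]; exact hdiam p hp q hq⟩
  have hTdiam : ∀ p ∈ T, ∀ q ∈ T, ‖p - q‖ ≤ d := by
    intro p hp q hq
    have h1 : Metric.diam S ≤ d := Metric.diam_le_of_forall_dist_le hd fun p hp q hq => by
      rw [dist_eq_norm]; exact hdiam p hp q hq
    have h2 : dist p q ≤ Metric.diam T := Metric.dist_le_diam_of_mem hSbdd.closure hp hq
    rw [hT, Metric.diam_closure] at h2
    rw [← dist_eq_norm]
    exact h2.trans h1
  have hTmeas : MeasurableSet T := isClosed_closure.measurableSet
  have hBmeas : MeasurableSet (Metric.closedBall (0 : EuclideanSpace ℝ (Fin n)) d) := Metric.isClosed_closedBall.measurableSet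
  set f : EuclideanSpace ℝ (Fin n) → ℝ≥0∞ := T.indicator 1 with hf
  set g : EuclideanSpace ℝ (Fin n) → ℝ≥0∞ := fun y => T.indicator 1 (-y) with hg
  set h : EuclideanSpace ℝ (Fin n) → ℝ≥0∞ := (Metric.closedBall (0 : EuclideanSpace ℝ (Fin n)) d).indicator 1 with hh
  have mf : Measurable f := measurable_const.indicator hTmeas
  have mg : Measurable g := mf.comp measurable_neg
  have mh : Measurable h := measurable_const.indicator hBmeas
  have hcond : ∀ x y, f x * g y ≤ h (x + y) ^ 2 := by
    intro x y
    by_cases hx : x ∈ T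
    · by_cases hy : -y ∈ T
      · have hxy : x + y ∈ Metric.closedBall (0 : EuclideanSpace ℝ (Fin n)) d := by
          rw [mem_closedBall_zero_iff]
          calc ‖x + y‖ = ‖x - -y‖ := by rw [sub_neg_eq_add]
            _ ≤ d := hTdiam x hx (-y) hy
        simp [hf, hg, hh, Set.indicator_of_mem, hx, hy, hxy]
      · simp [hg, Set.indicator_of_notMem, hy]
    · simp [hf, Set.indicator_of_notMem, hx]
  have key := isPL_euclidean n f g h mf mg mh hcond
  have hif : ∫⁻ x, f x = volume T := lintegral_indicator_one hTmeas
  have hig : ∫⁻ y, g y = volume T := by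
    have : MeasurePreserving (Neg.neg : EuclideanSpace ℝ (Fin n) → EuclideanSpace ℝ (Fin n)) volume volume := Measure.measurePreserving_neg _
    rw [hg]
    calc ∫⁻ y, T.indicator 1 (-y) = ∫⁻ x, T.indicator 1 x := this.lintegral_comp mf
      _ = volume T := lintegral_indicator_one hTmeas
  have hih : ∫⁻ z, h z = volume (Metric.closedBall (0 : EuclideanSpace ℝ (Fin n)) d) := lintegral_indicator_one hBmeas
  rw [hif, hig, hih] at key
  have hTle : volume T ≤ 2⁻¹ ^ n * volume (Metric.closedBall (0 : EuclideanSpace ℝ (Fin n)) d) := by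
    by_contra hcon
    push_neg at hcon
    exact absurd key (not_le.2 (by
      calc (2⁻¹ ^ n * volume (Metric.closedBall (0 : EuclideanSpace ℝ (Fin n)) d)) ^ 2
          = (2⁻¹ ^ n * volume (Metric.closedBall (0 : EuclideanSpace ℝ (Fin n)) d)) *
            (2⁻¹ ^ n * volume (Metric.closedBall (0 : EuclideanSpace ℝ (Fin n)) d)) := sq _
        _ < volume T * volume T := ENNReal.mul_lt_mul hcon hcon))
  have hball : (2⁻¹ : ℝ≥0∞) ^ n * volume (Metric.closedBall (0 : EuclideanSpace ℝ (Fin n)) d)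
      = volume (Metric.closedBall (0 : EuclideanSpace ℝ (Fin n)) (d / 2)) := by
    rw [Measure.addHaar_closedBall volume (0 : EuclideanSpace ℝ (Fin n)) hd,
      Measure.addHaar_closedBall volume (0 : EuclideanSpace ℝ (Fin n)) (by linarith : (0:ℝ) ≤ d / 2)]
    rw [← mul_assoc]
    congr 1
    have hrank : Module.finrank ℝ (EuclideanSpace ℝ (Fin n)) = n := finrank_euclideanSpace_fin
    rw [hrank]
    have hd2 : ((d/2)^n : ℝ) = (d^n) * ((2:ℝ)⁻¹)^n := by
      rw [div_pow, div_eq_mul_inv, ← inv_pow]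
    rw [hd2, ENNReal.ofReal_mul (by positivity : (0:ℝ) ≤ d^n),
      ENNReal.ofReal_pow (by norm_num : (0:ℝ) ≤ 2⁻¹)]
    have h2 : ENNReal.ofReal (2⁻¹ : ℝ) = (2⁻¹ : ℝ≥0∞) := by
      rw [ENNReal.ofReal_inv_of_pos (by norm_num)]
      norm_num
    rw [h2, mul_comm]
  calc volume S ≤ volume T := measure_mono subset_closure
    _ ≤ 2⁻¹ ^ n * volume (Metric.closedBall (0 : EuclideanSpace ℝ (Fin n)) d) := hTle
    _ = volume (Metric.closedBall (0 : EuclideanSpace ℝ (Fin n)) (d / 2)) := hball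

theorem stmt_12 (n : ℕ) (hn : 1 ≤ n) (I : Type*) [Countable I]
    (S : I → Set (EuclideanSpace ℝ (Fin n))) (dmax : ℝ) (hdmax : 0 < dmax)
    (hdiam : ∀ l, ∀ p ∈ S l, ∀ q ∈ S l, ‖p - q‖ ≤ dmax)
    (μ : ℝ) (hμ : 0 < μ) (c : EuclideanSpace ℝ (Fin n)) (r : ℝ)
    (hr : (μ / 2) * dmax ≤ r)
    (hcover : Metric.closedBall c r ⊆ ⋃ l, S l) :
    {l : I | (S l ∩ Metric.closedBall c r).Nonempty}.Infinite ∨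
      (μ ^ n ≤ (Nat.card {l : I | (S l ∩ Metric.closedBall c r).Nonempty} : ℝ) ∧
        ((¬ ∃ m : ℤ, μ ^ n = (m : ℝ)) →
          (⌊μ ^ n⌋ : ℝ) + 1
            ≤ (Nat.card {l : I | (S l ∩ Metric.closedBall c r).Nonempty} : ℝ))) := by
  set J : Set I := {l : I | (S l ∩ Metric.closedBall c r).Nonempty} with hJ
  by_cases hJinf : J.Infinite
  · exact Or.inl hJinf
  right
  have hJfin : J.Finite := Set.not_infinite.1 hJinf
  haveI : Fintype J := hJfin.fintype
  set k : ℕ := Nat.card J with hk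
  have hr0 : 0 < r := lt_of_lt_of_le (by positivity) hr
  -- covering of the ball by the cells meeting it
  have hcov2 : Metric.closedBall c r ⊆ ⋃ l : J, S l := by
    intro x hx
    obtain ⟨U, ⟨l, rfl⟩, hxl⟩ := hcover hx
    exact Set.mem_iUnion.2 ⟨⟨l, ⟨x, hxl, hx⟩⟩, hxl⟩
  set B1 : ℝ≥0∞ := volume (Metric.ball (0 : EuclideanSpace ℝ (Fin n)) 1) with hB1
  have hB1pos : 0 < B1 := Metric.measure_ball_pos volume _ one_pos
  have hB1top : B1 ≠ ⊤ := (Metric.isBounded_ball).measure_lt_top.ne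
  have hrank : Module.finrank ℝ (EuclideanSpace ℝ (Fin n)) = n := finrank_euclideanSpace_fin
  have hVball : volume (Metric.closedBall c r) = ENNReal.ofReal (r ^ n) * B1 := by
    rw [Measure.addHaar_closedBall volume c hr0.le, hrank]
  have hVhalf : volume (Metric.closedBall (0 : EuclideanSpace ℝ (Fin n)) (dmax / 2))
      = ENNReal.ofReal ((dmax / 2) ^ n) * B1 := by
    rw [Measure.addHaar_closedBall volume _ (by linarith : (0:ℝ) ≤ dmax / 2), hrank]
  have hchain : ENNReal.ofReal (r ^ n) * B1 ≤ (k : ℝ≥0∞) * (ENNReal.ofReal ((dmax/2) ^ n) * B1) := by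
    calc ENNReal.ofReal (r ^ n) * B1 = volume (Metric.closedBall c r) := hVball.symm
      _ ≤ volume (⋃ l : J, S l) := measure_mono hcov2
      _ ≤ ∑' l : J, volume (S l) := measure_iUnion_le _
      _ ≤ ∑' l : J, (ENNReal.ofReal ((dmax/2) ^ n) * B1) := by
          refine ENNReal.tsum_le_tsum fun l => ?_
          rw [← hVhalf]
          exact isodiametric (S l) dmax hdmax.le (hdiam l)
      _ = (k : ℝ≥0∞) * (ENNReal.ofReal ((dmax/2) ^ n) * B1) := by
          rw [tsum_fintype]
          rw [Finset.sum_const, Finset.card_univ, nsmul_eq_mul, hk, Nat.card_eq_fintype_card]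
  have hmain : r ^ n ≤ (k : ℝ) * (dmax/2) ^ n := by
    have h1 : ENNReal.ofReal (r ^ n) ≤ (k : ℝ≥0∞) * ENNReal.ofReal ((dmax/2) ^ n) := by
      rw [← mul_assoc] at hchain
      exact (ENNReal.mul_le_mul_iff_left hB1pos.ne' hB1top).1 hchain
    have h2 : (k : ℝ≥0∞) * ENNReal.ofReal ((dmax/2) ^ n)
        = ENNReal.ofReal ((k : ℝ) * (dmax/2) ^ n) := by
      rw [ENNReal.ofReal_mul (by positivity : (0:ℝ) ≤ (k:ℝ))]
      congr 1
      simp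
    rw [h2] at h1
    exact (ENNReal.ofReal_le_ofReal_iff (by positivity)).1 h1
  have hμk : μ ^ n ≤ (k : ℝ) := by
    have hd2 : (0:ℝ) < dmax / 2 := by linarith
    have hμr : μ ≤ r / (dmax / 2) := by
      rw [le_div_iff₀ hd2]
      calc μ * (dmax / 2) = μ / 2 * dmax := by ring
        _ ≤ r := hr
    calc μ ^ n ≤ (r / (dmax / 2)) ^ n := pow_le_pow_left₀ hμ.le hμr n
      _ = r ^ n / (dmax / 2) ^ n := div_pow r _ n
      _ ≤ (k : ℝ) := by
          rw [div_le_iff₀ (by positivity)]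
          exact hmain
  refine ⟨hμk, fun hnint => ?_⟩
  have hfloor : (⌊μ ^ n⌋ : ℝ) < μ ^ n := by
    rcases lt_or_eq_of_le (Int.floor_le (μ ^ n)) with hlt | heq
    · exact hlt
    · exact absurd ⟨⌊μ ^ n⌋, heq.symm⟩ hnint
  have hz : ⌊μ ^ n⌋ < (k : ℤ) := by
    have : (⌊μ ^ n⌋ : ℝ) < (k : ℝ) := lt_of_lt_of_le hfloor hμk
    exact_mod_cast this
  have : ⌊μ ^ n⌋ + 1 ≤ (k : ℤ) := hz
  calc (⌊μ ^ n⌋ : ℝ) + 1 ≤ (k : ℝ) := by exact_mod_cast this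
    _ = (k : ℝ) := rfl
end
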